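/- For a positive integer k, the region 𝒯(k,1,2,4) is nonempty if and only if 6 ≤ k ≤ 8. -/
import Mathlib


open MeasureTheory

/-- The BCZ transform T(x,y) = (y, ⌊(1+x)/y⌋·y − x). -/
noncomputable def bcz (p : ℝ × ℝ) : ℝ × ℝ :=
  (p.2, (⌊(1 + p.1) / p.2⌋ : ℝ) * p.2 - p.1)

/-- The Farey triangle 𝒯 = {(x,y) : 0 < x ≤ 1, 0 < y ≤ 1, x + y > 1}. -/
def fareyTriangle : Set (ℝ × ℝ) :=
  {p | 0 < p.1 ∧ p.1 ≤ 1 ∧ 0 < p.2 ∧ p.2 ≤ 1 ∧ 1 < p.1 + p.2}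

/-- The region 𝒯(k) = {(x,y) ∈ 𝒯 : ⌊(1+x)/y⌋ = k}. -/
def TT (k : ℕ) : Set (ℝ × ℝ) :=
  {p | p ∈ fareyTriangle ∧ ⌊(1 + p.1) / p.2⌋ = (k : ℤ)}

/-- The region 𝒯(k₁,…,k_r) = 𝒯(k₁) ∩ T⁻¹(𝒯(k₂)) ∩ ⋯ ∩ T^{−(r−1)}(𝒯(k_r)). -/
noncomputable def TTlist (ks : List ℕ) : Set (ℝ × ℝ) :=
  ⋂ i : Fin ks.length, (bcz^[i.1]) ⁻¹' TT (ks.get i)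

lemma mem_TTlist4 (p : ℝ × ℝ) (a b c d : ℕ) :
    p ∈ TTlist [a, b, c, d] ↔
      p ∈ TT a ∧ bcz p ∈ TT b ∧ bcz (bcz p) ∈ TT c ∧ bcz (bcz (bcz p)) ∈ TT d := by
  simp only [TTlist, Set.mem_iInter, Set.mem_preimage]
  constructor
  · intro h
    exact ⟨h ⟨0, by norm_num⟩, h ⟨1, by norm_num⟩, h ⟨2, by norm_num⟩, h ⟨3, by norm_num⟩⟩
  · rintro ⟨h0, h1, h2, h3⟩ i
    fin_cases i <;> simpa [Function.iterate_succ_apply] using (by assumption : _)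

lemma mem_TT_iff (x y : ℝ) (k : ℕ) :
    (x, y) ∈ TT k ↔ (0 < x ∧ x ≤ 1 ∧ 0 < y ∧ y ≤ 1 ∧ 1 < x + y) ∧
      (k : ℝ) * y ≤ 1 + x ∧ 1 + x < ((k : ℝ) + 1) * y := by
  constructor
  · rintro ⟨⟨hx, hx1, hy, hy1, hxy⟩, hf⟩
    rw [Int.floor_eq_iff] at hf
    push_cast at hf
    refine ⟨⟨hx, hx1, hy, hy1, hxy⟩, ?_, ?_⟩
    · calc (k : ℝ) * y ≤ ((1 + x) / y) * y := by
            apply mul_le_mul_of_nonneg_right hf.1 hy.le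
        _ = 1 + x := by field_simp
    · calc 1 + x = ((1 + x) / y) * y := by field_simp
        _ < ((k : ℝ) + 1) * y := by apply mul_lt_mul_of_pos_right hf.2 hy
  · rintro ⟨⟨hx, hx1, hy, hy1, hxy⟩, h1, h2⟩
    refine ⟨⟨hx, hx1, hy, hy1, hxy⟩, ?_⟩
    rw [Int.floor_eq_iff]
    push_cast
    constructor
    · rw [le_div_iff₀ hy]; exact h1
    · rw [div_lt_iff₀ hy]; exact h2

lemma bcz_of_floor (x y : ℝ) (k : ℕ) (h : ⌊(1 + x) / y⌋ = (k : ℤ)) :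
    bcz (x, y) = (y, (k : ℝ) * y - x) := by
  simp only [bcz, h]
  push_cast
  rfl

/-- 𝒯(k,1,2,4) is nonempty iff 6 ≤ k ≤ 8. -/
theorem TT_k124_nonempty_iff (k : ℕ) (hk : 0 < k) :
    (TTlist [k, 1, 2, 4]).Nonempty ↔ 6 ≤ k ∧ k ≤ 8 := by
  constructor
  · rintro ⟨⟨x, y⟩, hp⟩
    rw [mem_TTlist4] at hp
    obtain ⟨h0, h1, h2, h3⟩ := hp
    have e1 : bcz (x, y) = (y, (k : ℝ) * y - x) := bcz_of_floor x y k h0.2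
    rw [e1] at h1 h2 h3
    have e2 : bcz (y, (k : ℝ) * y - x) = ((k : ℝ) * y - x, (1 : ℕ) * ((k : ℝ) * y - x) - y) :=
      bcz_of_floor _ _ 1 h1.2
    rw [e2] at h2 h3
    have e3 : bcz ((k : ℝ) * y - x, (1 : ℕ) * ((k : ℝ) * y - x) - y) =
        ((1 : ℕ) * ((k : ℝ) * y - x) - y,
          (2 : ℕ) * ((1 : ℕ) * ((k : ℝ) * y - x) - y) - ((k : ℝ) * y - x)) :=
      bcz_of_floor _ _ 2 h2.2
    rw [e3] at h3
    rw [mem_TT_iff] at h0 h1 h2 h3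
    obtain ⟨⟨hx, hx1, hy, hy1, hxy⟩, f1, f2⟩ := h0
    obtain ⟨⟨g1, g2, g3, g4, g5⟩, g6, g7⟩ := h1
    obtain ⟨⟨i1, i2, i3, i4, i5⟩, i6, i7⟩ := h2
    obtain ⟨⟨j1, j2, j3, j4, j5⟩, j6, j7⟩ := h3
    push_cast at g6 g7 i6 i7 j6 j7 g3 g4 g5 i1 i2 i3 i4 i5 j1 j2 j3 j4 j5
    constructor
    · by_contra hlt
      push_neg at hlt
      have hk5 : (k : ℝ) ≤ 5 := by exact_mod_cast Nat.lt_succ_iff.mp hlt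
      have : (k : ℝ) * y ≤ 5 * y := mul_le_mul_of_nonneg_right hk5 hy.le
      linarith
    · by_contra hgt
      push_neg at hgt
      have hk9 : (9 : ℝ) ≤ (k : ℝ) := by exact_mod_cast hgt
      have : 9 * y ≤ (k : ℝ) * y := mul_le_mul_of_nonneg_right hk9 hy.le
      linarith
  · rintro ⟨h6, h8⟩
    interval_cases k
    · -- k = 6, witness (18/25, 17/60)
      refine ⟨(18/25, 17/60), ?_⟩
      rw [mem_TTlist4]
      have f0 : ⌊(1 + (18/25 : ℝ)) / (17/60)⌋ = ((6 : ℕ) : ℤ) := by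
        rw [Int.floor_eq_iff] <;> norm_num
      have e1 : bcz (18/25, 17/60) = ((17/60 : ℝ), 49/50) := by
        rw [bcz_of_floor _ _ 6 f0]; norm_num
      have f1 : ⌊(1 + (17/60 : ℝ)) / (49/50)⌋ = ((1 : ℕ) : ℤ) := by
        rw [Int.floor_eq_iff] <;> norm_num
      have e2 : bcz ((17/60 : ℝ), 49/50) = ((49/50 : ℝ), 209/300) := by
        rw [bcz_of_floor _ _ 1 f1]; norm_num
      have f2 : ⌊(1 + (49/50 : ℝ)) / (209/300)⌋ = ((2 : ℕ) : ℤ) := by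
        rw [Int.floor_eq_iff] <;> norm_num
      have e3 : bcz ((49/50 : ℝ), 209/300) = ((209/300 : ℝ), 31/75) := by
        rw [bcz_of_floor _ _ 2 f2]; norm_num
      have f3 : ⌊(1 + (209/300 : ℝ)) / (31/75)⌋ = ((4 : ℕ) : ℤ) := by
        rw [Int.floor_eq_iff] <;> norm_num
      rw [e1, e2, e3]
      exact ⟨⟨⟨by norm_num, by norm_num, by norm_num, by norm_num, by norm_num⟩, f0⟩,
        ⟨⟨by norm_num, by norm_num, by norm_num, by norm_num, by norm_num⟩, f1⟩,
        ⟨⟨by norm_num, by norm_num, by norm_num, by norm_num, by norm_num⟩, f2⟩,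
        ⟨⟨by norm_num, by norm_num, by norm_num, by norm_num, by norm_num⟩, f3⟩⟩
    · -- k = 7, witness (77/100, 7/30)
      refine ⟨(77/100, 7/30), ?_⟩
      rw [mem_TTlist4]
      have f0 : ⌊(1 + (77/100 : ℝ)) / (7/30)⌋ = ((7 : ℕ) : ℤ) := by
        rw [Int.floor_eq_iff] <;> norm_num
      have e1 : bcz (77/100, 7/30) = ((7/30 : ℝ), 259/300) := by
        rw [bcz_of_floor _ _ 7 f0]; norm_num
      have f1 : ⌊(1 + (7/30 : ℝ)) / (259/300)⌋ = ((1 : ℕ) : ℤ) := by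
        rw [Int.floor_eq_iff] <;> norm_num
      have e2 : bcz ((7/30 : ℝ), 259/300) = ((259/300 : ℝ), 63/100) := by
        rw [bcz_of_floor _ _ 1 f1]; norm_num
      have f2 : ⌊(1 + (259/300 : ℝ)) / (63/100)⌋ = ((2 : ℕ) : ℤ) := by
        rw [Int.floor_eq_iff] <;> norm_num
      have e3 : bcz ((259/300 : ℝ), 63/100) = ((63/100 : ℝ), 119/300) := by
        rw [bcz_of_floor _ _ 2 f2]; norm_num
      have f3 : ⌊(1 + (63/100 : ℝ)) / (119/300)⌋ = ((4 : ℕ) : ℤ) := by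
        rw [Int.floor_eq_iff] <;> norm_num
      rw [e1, e2, e3]
      exact ⟨⟨⟨by norm_num, by norm_num, by norm_num, by norm_num, by norm_num⟩, f0⟩,
        ⟨⟨by norm_num, by norm_num, by norm_num, by norm_num, by norm_num⟩, f1⟩,
        ⟨⟨by norm_num, by norm_num, by norm_num, by norm_num, by norm_num⟩, f2⟩,
        ⟨⟨by norm_num, by norm_num, by norm_num, by norm_num, by norm_num⟩, f3⟩⟩
    · -- k = 8, witness (41/50, 61/300)
      refine ⟨(41/50, 61/300), ?_⟩
      rw [mem_TTlist4]
      have f0 : ⌊(1 + (41/50 : ℝ)) / (61/300)⌋ = ((8 : ℕ) : ℤ) := by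
        rw [Int.floor_eq_iff] <;> norm_num
      have e1 : bcz (41/50, 61/300) = ((61/300 : ℝ), 121/150) := by
        rw [bcz_of_floor _ _ 8 f0]; norm_num
      have f1 : ⌊(1 + (61/300 : ℝ)) / (121/150)⌋ = ((1 : ℕ) : ℤ) := by
        rw [Int.floor_eq_iff] <;> norm_num
      have e2 : bcz ((61/300 : ℝ), 121/150) = ((121/150 : ℝ), 181/300) := by
        rw [bcz_of_floor _ _ 1 f1]; norm_num
      have f2 : ⌊(1 + (121/150 : ℝ)) / (181/300)⌋ = ((2 : ℕ) : ℤ) := by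
        rw [Int.floor_eq_iff] <;> norm_num
      have e3 : bcz ((121/150 : ℝ), 181/300) = ((181/300 : ℝ), 2/5) := by
        rw [bcz_of_floor _ _ 2 f2]; norm_num
      have f3 : ⌊(1 + (181/300 : ℝ)) / (2/5)⌋ = ((4 : ℕ) : ℤ) := by
        rw [Int.floor_eq_iff] <;> norm_num
      rw [e1, e2, e3]
      exact ⟨⟨⟨by norm_num, by norm_num, by norm_num, by norm_num, by norm_num⟩, f0⟩,
        ⟨⟨by norm_num, by norm_num, by norm_num, by norm_num, by norm_num⟩, f1⟩,
        ⟨⟨by norm_num, by norm_num, by norm_num, by norm_num, by norm_num⟩, f2⟩,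
        ⟨⟨by norm_num, by norm_num, by norm_num, by norm_num, by norm_num⟩, f3⟩⟩
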